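/- Let X = {x⁽¹⁾, x⁽²⁾}, let F = {f_1, f_2} with f_1(x) = 1{x = x⁽¹⁾} and f_2(x) = 1{x = x⁽²⁾}, and let D be uniform on {(x⁽¹⁾,1), (x⁽¹⁾,0), (x⁽²⁾,1)}. For a bag (B,α) of size k and f ∈ F, define the proportional log loss ℓ_LOG(f,(B,α)) = −α·log((1/k)·Σ_{j=1}^k f(x_j)) − (1−α)·log(1 − (1/k)·Σ_{j=1}^k f(x_j)), valued in [0,∞]. If the bag size k, number of bags n, and δ ∈ (0,1) satisfy k ≥ 18·log(2n/δ), then with probability at least 1−δ over n i.i.d. bags of size k from D, ℓ_LOG(f_2,(B_i,α_i)) ≥ ℓ_LOG(f_1,(B_i,α_i)) for every i ∈ [n]; consequently every minimizer of the empirical proportional log loss over F equals f_1, which satisfies L(f_1) = L(f_2) + 1/3. -/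

import Mathlib

open MeasureTheory Finset
open scoped ENNReal NNReal

noncomputable section

namespace LLP

/-- Real value of a Boolean label/prediction (`0` or `1`). -/
def bval (b : Bool) : ℝ := if b then 1 else 0

/-- Label proportion `α` of a bag of `k` labeled examples. -/
def labelProp {X : Type*} {k : ℕ} (bag : Fin k → X × Bool) : ℝ :=
  (∑ j, bval (bag j).2) / (k : ℝ)

/-- Average prediction `(1/k)·Σ_j f(x_j)` of `f` on a bag. -/
def predProp {X : Type*} {k : ℕ} (f : X → Bool) (bag : Fin k → X × Bool) : ℝ :=
  (∑ j, bval (f (bag j).1)) / (k : ℝ)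

/-- Instance-level classification loss `L(f) = Pr_{(x,y)∼D}[f(x) ≠ y]`. -/
def err {X : Type*} [MeasurableSpace X] (D : Measure (X × Bool)) (f : X → Bool) : ℝ :=
  (D {p | f p.1 ≠ p.2}).toReal

/-- `S` is shattered by the Boolean-valued class `F`. -/
def Shatters {Z : Type*} (F : Set (Z → Bool)) (S : Finset Z) : Prop :=
  ∀ T ⊆ S, ∃ f ∈ F, ∀ z ∈ S, (f z = true ↔ z ∈ T)

/-- The VC dimension of `F` is at most `d`. -/
def VCDimLE {Z : Type*} (F : Set (Z → Bool)) (d : ℕ) : Prop :=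
  ∀ S : Finset Z, Shatters F S → S.card ≤ d

/-- Joint distribution of `n` i.i.d. bags, each consisting of `k` i.i.d. draws from `D`. -/
def bagMeasure {X : Type*} [MeasurableSpace X] (D : Measure (X × Bool)) (n k : ℕ) :
    Measure (Fin n → Fin k → X × Bool) :=
  Measure.pi fun _ => Measure.pi fun _ => D

/-- Empirical proportional (0-1) risk: fraction of bags whose predicted proportion
mismatches the observed label proportion. -/
def empPM {X : Type*} {n k : ℕ} (f : X → Bool) (ω : Fin n → Fin k → X × Bool) : ℝ :=
  (∑ i, if predProp f (ω i) = labelProp (ω i) then (0 : ℝ) else 1) / (n : ℝ)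

/-- Empirical proportional square loss. -/
def empSQ {X : Type*} {n k : ℕ} (f : X → Bool) (ω : Fin n → Fin k → X × Bool) : ℝ :=
  (∑ i, (predProp f (ω i) - labelProp (ω i)) ^ 2) / (n : ℝ)

/-- The EasyLLP estimate of the 0-1 loss on a single bag, using marginal label
proportion `p`. -/
def ellEZ {X : Type*} {k : ℕ} (p : ℝ) (f : X → Bool) (bag : Fin k → X × Bool) : ℝ :=
  ((k : ℝ) * (labelProp bag - p) + p) * (1 - predProp f bag)
    + ((k : ℝ) * (p - labelProp bag) + (1 - p)) * predProp f bag

/-- Marginal label proportion `p = Pr[y = 1]`. -/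
def labelP {X : Type*} [MeasurableSpace X] (D : Measure (X × Bool)) : ℝ :=
  (D {q | q.2 = true}).toReal

end LLP

namespace LLP

/-- `f_1(x) = 1{x = x⁽¹⁾}` on `X = Fin 2` (`0 = x⁽¹⁾`, `1 = x⁽²⁾`). -/
def f1 : Fin 2 → Bool := fun x => decide (x = 0)

/-- `f_2(x) = 1{x = x⁽²⁾}`. -/
def f2 : Fin 2 → Bool := fun x => decide (x = 1)

/-- The uniform distribution on `{(x⁽¹⁾,1), (x⁽¹⁾,0), (x⁽²⁾,1)}`. -/
def D1 : Measure (Fin 2 × Bool) :=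
  (PMF.uniformOfFinset ({(0, true), (0, false), (1, true)} : Finset (Fin 2 × Bool))
    (by decide)).toMeasure

/-- `[0,∞]`-valued negative logarithm: `−log x` for `x ∈ (0,1]`, and `∞` at `x = 0`. -/
def negLog (x : ℝ) : ℝ≥0∞ := if x = 0 then ⊤ else ENNReal.ofReal (-Real.log x)

/-- The proportional log loss
`ℓ_LOG(f,(B,α)) = −α·log((1/k)Σ_j f(x_j)) − (1−α)·log(1 − (1/k)Σ_j f(x_j))`,
valued in `[0,∞]`. -/
def ellLOG {X : Type*} {k : ℕ} (f : X → Bool) (bag : Fin k → X × Bool) : ℝ≥0∞ :=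
  ENNReal.ofReal (labelProp bag) * negLog (predProp f bag)
    + ENNReal.ofReal (1 - labelProp bag) * negLog (1 - predProp f bag)

/-!
On a bag with label proportion `α` and `f₁`-proportion `ρ`, the prediction proportion of
`f₂ = ¬f₁` is `1 - ρ`, so `ℓ_LOG(f₂) - ℓ_LOG(f₁) = (2α - 1)(log ρ - log (1 - ρ))`, which is
positive once `α > 1/2` and `1/2 < ρ < 1`. Under `D` a label `0` and an instance `x⁽²⁾` each
have probability `1/3`, so by a Chernoff bound with weight `7/5` (close to the optimal `√2`)
each majority fails with probability at most `(33/35)^k`, and `ρ = 1` has probability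
`(2/3)^k`. For `k ≥ 13` these add up to at most `2 (17/18)^k ≤ 2 e^{-k/18} ≤ δ/n`, and
Bernoulli's inequality over the `n` independent bags gives `1 - δ`.
-/

open ProbabilityTheory

theorem measure_pi_card_notMem_le_card_mem_le {Ω ι : Type*} [MeasurableSpace Ω] [Fintype ι]
    (μ : Measure Ω) [IsProbabilityMeasure μ] {s : Set Ω} (hs : MeasurableSet s)
    [DecidablePred (· ∈ s)] {r : ℝ≥0∞} (hr : 1 ≤ r) (hr_top : r ≠ ⊤) :
    Measure.pi (fun _ : ι => μ) {x | #{i | x i ∉ s} ≤ #{i | x i ∈ s}}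
      ≤ (r * μ s + r⁻¹ * μ sᶜ) ^ Fintype.card ι := by
  set w : Ω → ℝ≥0∞ := s.piecewise (fun _ => r) (fun _ => r⁻¹)
  have hw : Measurable w := Measurable.piecewise hs measurable_const measurable_const
  have hwx : ∀ i, Measurable fun x : ι → Ω => w (x i) := fun i => hw.comp (measurable_pi_apply i)
  have hsub : {x : ι → Ω | #{i | x i ∉ s} ≤ #{i | x i ∈ s}} ⊆ {x | 1 ≤ ∏ i, w (x i)} := by
    intro x hx
    have hprod : ∏ i, w (x i) = r ^ #{i | x i ∈ s} * r⁻¹ ^ #{i | x i ∉ s} := by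
      simp only [w, Set.piecewise, Finset.prod_ite, Finset.prod_const]
    calc 1 = (r * r⁻¹) ^ #{i | x i ∉ s} := by
          rw [ENNReal.mul_inv_cancel (zero_lt_one.trans_le hr).ne' hr_top, one_pow]
      _ ≤ ∏ i, w (x i) := by
          rw [hprod, mul_pow]
          gcongr ?_ * _
          exact pow_le_pow_right₀ hr hx
  calc Measure.pi (fun _ : ι => μ) {x | #{i | x i ∉ s} ≤ #{i | x i ∈ s}}
      ≤ 1 * Measure.pi (fun _ : ι => μ) {x | 1 ≤ ∏ i, w (x i)} := by
        rw [one_mul]; exact measure_mono hsub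
    _ ≤ ∫⁻ x, ∏ i, w (x i) ∂Measure.pi (fun _ : ι => μ) :=
        mul_meas_ge_le_lintegral₀ (Finset.measurable_prod _ fun i _ => hwx i).aemeasurable 1
    _ = ∏ i : ι, ∫⁻ x, w (x i) ∂Measure.pi (fun _ : ι => μ) :=
        lintegral_prod_eq_prod_lintegral_of_indepFun _ _
          (iIndepFun_pi fun _ => hw.aemeasurable) hwx
    _ = (r * μ s + r⁻¹ * μ sᶜ) ^ Fintype.card ι := by
        simp_rw [(measurePreserving_eval (fun _ : ι => μ) _).lintegral_comp hw,
          Finset.prod_const, Finset.card_univ, w, lintegral_piecewise hs, setLIntegral_const]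

lemma negLog_of_ne_zero {x : ℝ} (hx : x ≠ 0) : negLog x = ENNReal.ofReal (-Real.log x) :=
  if_neg hx

lemma ofReal_mul_negLog_add_lt_swap {a r r' : ℝ} (ha : 1 / 2 < a) (ha₁ : a ≤ 1) (hr' : 0 < r')
    (hr'r : r' < r) (hr₁ : r ≤ 1) :
    ENNReal.ofReal a * negLog r + ENNReal.ofReal (1 - a) * negLog r'
      < ENNReal.ofReal a * negLog r' + ENNReal.ofReal (1 - a) * negLog r := by
  have hu : 0 ≤ -Real.log r := neg_nonneg.mpr (Real.log_nonpos (hr'.trans hr'r).le hr₁)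
  have huv : -Real.log r < -Real.log r' := neg_lt_neg (Real.log_lt_log hr' hr'r)
  rw [negLog_of_ne_zero (hr'.trans hr'r).ne', negLog_of_ne_zero hr'.ne',
    ← ENNReal.ofReal_mul (by linarith), ← ENNReal.ofReal_mul (by linarith),
    ← ENNReal.ofReal_mul (by linarith), ← ENNReal.ofReal_mul (by linarith),
    ← ENNReal.ofReal_add (by positivity) (by nlinarith),
    ← ENNReal.ofReal_add (by nlinarith) (by nlinarith),
    ENNReal.ofReal_lt_ofReal_iff (by nlinarith)]
  nlinarith

section Bags

variable {X : Type*} {k : ℕ}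

lemma sum_bval (b : Fin k → Bool) : ∑ j, bval (b j) = #{j | b j = true} := by
  rw [Finset.card_filter, Nat.cast_sum]
  exact Finset.sum_congr rfl fun j _ => by cases b j <;> simp [bval]

lemma card_true_add_card_false (b : Fin k → Bool) :
    #{j | b j = true} + #{j | b j = false} = k := by
  simpa using Finset.card_filter_add_card_filter_not (s := univ) (fun j => b j = true)

def IsGoodBag (f : X → Bool) (bag : Fin k → X × Bool) : Prop :=
  #{j | (bag j).2 = false} < #{j | (bag j).2 = true} ∧
    #{j | f (bag j).1 = false} < #{j | f (bag j).1 = true} ∧ ∃ j, f (bag j).1 = false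

lemma ellLOG_lt_ellLOG_not {f : X → Bool} {bag : Fin k → X × Bool} (h : IsGoodBag f bag) :
    ellLOG f bag < ellLOG (fun x => !f x) bag := by
  obtain ⟨hα, hρ, j₀, hj₀⟩ := h
  have hk : (0 : ℝ) < k := by exact_mod_cast j₀.pos
  have hF : 0 < #{j | f (bag j).1 = false} := card_pos.mpr ⟨j₀, by simp [hj₀]⟩
  have hlabel : (#{j | (bag j).2 = true} : ℝ) + #{j | (bag j).2 = false} = k := by
    exact_mod_cast card_true_add_card_false fun j => (bag j).2
  have hpred : (#{j | f (bag j).1 = true} : ℝ) + #{j | f (bag j).1 = false} = k := by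
    exact_mod_cast card_true_add_card_false fun j => f (bag j).1
  have hα' : labelProp bag = #{j | (bag j).2 = true} / k := by rw [labelProp, sum_bval]
  have hρ' : predProp f bag = #{j | f (bag j).1 = true} / k := by rw [predProp, sum_bval]
  have hnot : predProp (fun x => !f x) bag = #{j | f (bag j).1 = false} / k := by
    simp [predProp, sum_bval]
  have h₁ : 1 - predProp f bag = predProp (fun x => !f x) bag := by
    rw [hρ', hnot]; field_simp; linarith
  have h₂ : 1 - predProp (fun x => !f x) bag = predProp f bag := by linarith
  rw [ellLOG, ellLOG, h₁, h₂]
  have hα'' : (#{j | (bag j).2 = false} : ℝ) < #{j | (bag j).2 = true} := by exact_mod_cast hα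
  have hρ'' : (#{j | f (bag j).1 = false} : ℝ) < #{j | f (bag j).1 = true} := by
    exact_mod_cast hρ
  apply ofReal_mul_negLog_add_lt_swap
  · rw [hα', lt_div_iff₀ hk]; linarith
  · rw [hα', div_le_one hk]; linarith [(#{j | (bag j).2 = false}).cast_nonneg (α := ℝ)]
  · rw [hnot]; exact div_pos (by exact_mod_cast hF) hk
  · rw [hnot, hρ']; exact div_lt_div_of_pos_right hρ'' hk
  · rw [hρ', div_le_one hk]; linarith [(#{j | f (bag j).1 = false}).cast_nonneg (α := ℝ)]

end Bags

instance : IsProbabilityMeasure D1 := by unfold D1; infer_instance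

instance {X : Type*} [MeasurableSpace X] (D : Measure (X × Bool)) [IsProbabilityMeasure D]
    (n k : ℕ) : IsProbabilityMeasure (bagMeasure D n k) := by
  unfold bagMeasure; infer_instance

lemma D1_apply_eq_ofReal {s : Set (Fin 2 × Bool)} [DecidablePred (· ∈ s)] {c : ℕ}
    (hc : #{q ∈ ({(0, true), (0, false), (1, true)} : Finset (Fin 2 × Bool)) | q ∈ s} = c) :
    D1 s = ENNReal.ofReal (c / 3) := by
  classical
  rw [D1, PMF.toMeasure_uniformOfFinset_apply (ht := (Set.toFinite s).measurableSet),
    ENNReal.ofReal_div_of_pos (by norm_num)]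
  convert congrArg (fun m : ℕ => (m : ℝ≥0∞) / 3) hc <;> simp

lemma err_D1_f1 : err D1 f1 = 2 / 3 := by
  rw [err, D1_apply_eq_ofReal (c := 2) (by decide)]; norm_num

lemma err_D1_f2 : err D1 f2 = 1 / 3 := by
  rw [err, D1_apply_eq_ofReal (c := 1) (by decide)]; norm_num

lemma f2_eq_not_f1 : f2 = fun x => !f1 x := by
  funext x; fin_cases x <;> rfl

lemma measure_pi_D1_card_le_card_le (s : Set (Fin 2 × Bool)) [DecidablePred (· ∈ s)]
    (hs : #{q ∈ ({(0, true), (0, false), (1, true)} : Finset (Fin 2 × Bool)) | q ∈ s} = 1)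
    (hsc : #{q ∈ ({(0, true), (0, false), (1, true)} : Finset (Fin 2 × Bool)) | q ∈ sᶜ} = 2) :
    Measure.pi (fun _ : Fin k => D1) {x | #{i | x i ∉ s} ≤ #{i | x i ∈ s}}
      ≤ ENNReal.ofReal (33 / 35) ^ k := by
  have h := measure_pi_card_notMem_le_card_mem_le (ι := Fin k) D1 (Set.toFinite s).measurableSet
    (r := ENNReal.ofReal (7 / 5)) (by norm_num) ENNReal.ofReal_ne_top
  rw [D1_apply_eq_ofReal hs, D1_apply_eq_ofReal hsc, Fintype.card_fin] at h
  convert h using 2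
  rw [← ENNReal.ofReal_inv_of_pos (by norm_num), ← ENNReal.ofReal_mul (by norm_num),
    ← ENNReal.ofReal_mul (by norm_num), ← ENNReal.ofReal_add (by norm_num) (by norm_num)]
  norm_num

lemma measure_pi_D1_not_isGoodBag_le :
    Measure.pi (fun _ : Fin k => D1) {bag | ¬ IsGoodBag f1 bag}
      ≤ ENNReal.ofReal (2 * (33 / 35) ^ k + (2 / 3) ^ k) := by
  set μ := Measure.pi (fun _ : Fin k => D1)
  set A : Set (Fin k → Fin 2 × Bool) :=
    {x | #{i | x i ∉ {q | q.2 = false}} ≤ #{i | x i ∈ {q | q.2 = false}}}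
  set B : Set (Fin k → Fin 2 × Bool) :=
    {x | #{i | x i ∉ {q | f1 q.1 = false}} ≤ #{i | x i ∈ {q | f1 q.1 = false}}}
  set C : Set (Fin k → Fin 2 × Bool) := Set.univ.pi fun _ => {q | f1 q.1 = true}
  have hsub : {bag | ¬ IsGoodBag f1 bag} ⊆ A ∪ B ∪ C := by
    intro bag h
    simp only [IsGoodBag, not_and_or, not_lt, not_exists] at h
    simpa [A, B, C, or_assoc] using h
  calc μ {bag | ¬ IsGoodBag f1 bag} ≤ μ A + μ B + μ C :=
        (measure_mono hsub).trans <| (measure_union_le _ _).trans <|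
          add_le_add_left (measure_union_le _ _) _
    _ ≤ ENNReal.ofReal (33 / 35) ^ k + ENNReal.ofReal (33 / 35) ^ k
          + ENNReal.ofReal (2 / 3) ^ k := by
        gcongr
        · exact measure_pi_D1_card_le_card_le {q | q.2 = false} (by decide) (by decide)
        · exact measure_pi_D1_card_le_card_le {q | f1 q.1 = false} (by decide) (by decide)
        · rw [Measure.pi_pi, D1_apply_eq_ofReal (s := {q | f1 q.1 = true}) (c := 2) (by decide)]
          simp
    _ = ENNReal.ofReal (2 * (33 / 35) ^ k + (2 / 3) ^ k) := by
        rw [ENNReal.ofReal_add (by positivity) (by positivity), ENNReal.ofReal_mul zero_le_two,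
          ENNReal.ofReal_pow (by norm_num), ENNReal.ofReal_pow (by norm_num), ENNReal.ofReal_ofNat,
          two_mul]

lemma pi_isGoodBag_subset {n k : ℕ} (hn : 1 ≤ n) :
    Set.univ.pi (fun _ : Fin n => {bag : Fin k → Fin 2 × Bool | IsGoodBag f1 bag}) ⊆
      {ω | (∀ i, ellLOG f1 (ω i) ≤ ellLOG f2 (ω i)) ∧
        ∀ g ∈ ({f1, f2} : Set (Fin 2 → Bool)),
          (∀ f ∈ ({f1, f2} : Set (Fin 2 → Bool)),
            ∑ i, ellLOG g (ω i) ≤ ∑ i, ellLOG f (ω i)) → g = f1} := by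
  intro ω hω
  have hlt (i : Fin n) : ellLOG f1 (ω i) < ellLOG f2 (ω i) :=
    f2_eq_not_f1 ▸ ellLOG_lt_ellLOG_not (hω i trivial)
  have hsum : ∑ i, ellLOG f1 (ω i) < ∑ i, ellLOG f2 (ω i) :=
    ENNReal.sum_lt_sum_of_nonempty (univ_nonempty_iff.mpr ⟨⟨0, hn⟩⟩) fun i _ => hlt i
  refine ⟨fun i => (hlt i).le, ?_⟩
  rintro g (rfl | rfl) hmin
  · rfl
  · exact absurd (hmin f1 (by simp)) hsum.not_ge

lemma two_mul_pow_add_pow_le {k : ℕ} (hk : 13 ≤ k) :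
    2 * (33 / 35 : ℝ) ^ k + (2 / 3) ^ k ≤ 2 * (17 / 18) ^ k := by
  have h₁ : (594 / 595 : ℝ) ^ k ≤ (594 / 595) ^ 13 :=
    pow_le_pow_of_le_one (by norm_num) (by norm_num) hk
  have h₂ : (12 / 17 : ℝ) ^ k ≤ (12 / 17) ^ 13 :=
    pow_le_pow_of_le_one (by norm_num) (by norm_num) hk
  calc 2 * (33 / 35 : ℝ) ^ k + (2 / 3) ^ k
      = (2 * (594 / 595) ^ k + (12 / 17) ^ k) * (17 / 18) ^ k := by
        rw [add_mul, mul_assoc, ← mul_pow, ← mul_pow]; norm_num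
    _ ≤ (2 * (594 / 595) ^ 13 + (12 / 17) ^ 13) * (17 / 18) ^ k := by gcongr
    _ ≤ 2 * (17 / 18) ^ k := by gcongr; norm_num

lemma pow_seventeen_div_eighteen_le_exp (k : ℕ) : (17 / 18 : ℝ) ^ k ≤ Real.exp (-(k / 18)) := by
  calc (17 / 18 : ℝ) ^ k ≤ Real.exp (-(1 / 18)) ^ k := by
        gcongr; linarith [Real.one_sub_le_exp_neg (1 / 18)]
    _ = Real.exp (-(k / 18)) := by rw [← Real.exp_nat_mul]; ring_nf

lemma thirteen_le_of_log_le {k n : ℕ} {δ : ℝ} (hδ₀ : 0 < δ) (hδ₁ : δ < 1) (hn : 1 ≤ n)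
    (hk : 18 * Real.log (2 * n / δ) ≤ k) : 13 ≤ k := by
  have h2 : (2 : ℝ) < 2 * n / δ := by
    rw [lt_div_iff₀ hδ₀]; nlinarith [(Nat.one_le_cast (α := ℝ)).mpr hn]
  have := Real.log_lt_log two_pos h2
  have : (12 : ℝ) < k := by linarith [Real.log_two_gt_d9]
  exact_mod_cast this

lemma two_mul_mul_exp_le {k n : ℕ} {δ : ℝ} (hδ₀ : 0 < δ) (hn : 1 ≤ n)
    (hk : 18 * Real.log (2 * n / δ) ≤ k) : 2 * n * Real.exp (-(k / 18)) ≤ δ := by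
  have hn₀ : (0 : ℝ) < n := by exact_mod_cast hn
  calc 2 * n * Real.exp (-(k / 18)) ≤ 2 * n * Real.exp (-Real.log (2 * n / δ)) := by
        gcongr; linarith
    _ = δ := by rw [Real.exp_neg, Real.exp_log (by positivity)]; field_simp

lemma toReal_measure_pi_D1_not_isGoodBag_le {k n : ℕ} {δ : ℝ} (hδ₀ : 0 < δ) (hδ₁ : δ < 1)
    (hn : 1 ≤ n) (hk : 18 * Real.log (2 * n / δ) ≤ k) :
    (Measure.pi (fun _ : Fin k => D1) {bag | ¬ IsGoodBag f1 bag}).toReal ≤ δ / n := by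
  rw [le_div_iff₀ (by positivity)]
  calc (Measure.pi (fun _ : Fin k => D1) {bag | ¬ IsGoodBag f1 bag}).toReal * n
      ≤ (2 * (33 / 35) ^ k + (2 / 3) ^ k) * n := by
        gcongr
        exact ENNReal.toReal_le_of_le_ofReal (by positivity) measure_pi_D1_not_isGoodBag_le
    _ ≤ 2 * (17 / 18) ^ k * n := by
        gcongr; exact two_mul_pow_add_pow_le (thirteen_le_of_log_le hδ₀ hδ₁ hn hk)
    _ ≤ 2 * Real.exp (-(k / 18)) * n := by gcongr; exact pow_seventeen_div_eighteen_le_exp k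
    _ ≤ δ := by linarith [two_mul_mul_exp_le hδ₀ hn hk]

/-- failure of the proportional log loss in the agnostic setting.
If `k ≥ 18·log(2n/δ)` with `δ ∈ (0,1)` and `n ≥ 1`, then with probability at least
`1 − δ` over `n` i.i.d. bags of size `k` from `D1`, `ℓ_LOG(f₂,(B_i,α_i)) ≥
ℓ_LOG(f₁,(B_i,α_i))` for every `i`, and every minimizer of the empirical proportional
log loss over `F = {f₁, f₂}` equals `f₁`; moreover `L(f₁) = L(f₂) + 1/3`. -/
theorem prop_log_loss_fails :
    err D1 f1 = err D1 f2 + 1 / 3 ∧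
    ∀ (k n : ℕ) (δ : ℝ), 0 < δ → δ < 1 → 1 ≤ n →
      18 * Real.log (2 * (n : ℝ) / δ) ≤ (k : ℝ) →
      1 - δ ≤
        ((bagMeasure D1 n k)
          {ω | (∀ i, ellLOG f1 (ω i) ≤ ellLOG f2 (ω i)) ∧
            ∀ g ∈ ({f1, f2} : Set (Fin 2 → Bool)),
              (∀ f ∈ ({f1, f2} : Set (Fin 2 → Bool)),
                  ∑ i, ellLOG g (ω i) ≤ ∑ i, ellLOG f (ω i)) →
                g = f1}).toReal := by
  refine ⟨by rw [err_D1_f1, err_D1_f2]; norm_num, fun k n δ hδ₀ hδ₁ hn hk => ?_⟩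
  set G := {bag : Fin k → Fin 2 × Bool | IsGoodBag f1 bag}
  have hG : MeasurableSet G := (Set.toFinite G).measurableSet
  set p := (Measure.pi (fun _ : Fin k => D1) Gᶜ).toReal
  have hp : p ≤ δ / n := toReal_measure_pi_D1_not_isGoodBag_le hδ₀ hδ₁ hn hk
  have hp₁ : p ≤ 1 := ENNReal.toReal_le_of_le_ofReal zero_le_one (by simpa using prob_le_one)
  have hp_eq : p = 1 - (Measure.pi (fun _ : Fin k => D1) G).toReal :=
    probReal_compl_eq_one_sub hG
  calc 1 - δ ≤ 1 + n * -p := by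
        rw [le_div_iff₀ (by positivity)] at hp; linarith
    _ ≤ (1 - p) ^ n := by
        rw [sub_eq_add_neg]; exact one_add_mul_le_pow (by linarith) n
    _ = (bagMeasure D1 n k (Set.univ.pi fun _ => G)).toReal := by
        rw [bagMeasure, Measure.pi_pi, prod_const, card_univ, Fintype.card_fin,
          ENNReal.toReal_pow, hp_eq, sub_sub_cancel]
    _ ≤ _ := ENNReal.toReal_mono (measure_ne_top _ _) (measure_mono (pi_isGoodBag_subset hn))

end LLP
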